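/- arXiv:0810.0141 — 4 statements merged into one kernel-verified Lean document; each statement's English description precedes it below -/
import Mathlib

section
/- (Bott's formula, dimension part) For 0 ≤ p < m, the dimension of H^0(ℙ^n, Ω^p(m)) equals binomial(m−1, p) · binomial(m+n−p, m), and by Serre duality this also equals h^n(ℙ^n, Ω^{n−p}(−m)). -/
/-!
STATEMENT 4 (Bott's formula, dimension part): For `0 ≤ p < m`,
`h^0(ℙ^n, Ω^p(m)) = C(m−1, p)·C(m+n−p, m)`, and by Serre duality this also equals
`h^n(ℙ^n, Ω^{n−p}(−m))`.

Formalization: `H^0(ℙ^n, Ω^p(m))` is realized by its standard concrete model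
(Euler-contraction kernel of polynomial-coefficient alternating forms, via the Euler
sequence); for the `h^n` clause — Mathlib has no higher coherent sheaf cohomology —
we quantify over any dimension function `h q p m = h^q(ℙ^n, Ω^p(m))` that agrees with
the concrete model in degree 0 and satisfies Serre duality `h^q(Ω^p(m)) = h^{n−q}(Ω^{n−p}(−m))`.
-/

open MvPolynomial

open MvPolynomial

/-- Concrete model of `H^0(ℙ^n, Ω^p(m))`: polynomial-coefficient alternating `p`-forms
`ω = Σ f_I dx_I` on `ℂ^{n+1}` with `f_I` homogeneous of degree `m − p`, killed by
contraction with the Euler vector field `Σ x_i ∂_i`. -/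
noncomputable def H0model (n p : ℕ) (m : ℤ) :
    Submodule ℂ
      (AlternatingMap ℂ (Fin (n + 1) → ℂ) (MvPolynomial (Fin (n + 1)) ℂ) (Fin p)) where
  carrier :=
    {ω | (∀ (v : Fin p → (Fin (n + 1) → ℂ)) (d : ℕ), (d : ℤ) ≠ m - p →
            homogeneousComponent d (ω v) = 0) ∧
      ∀ (hp : 0 < p) (w : Fin p → (Fin (n + 1) → ℂ)),
        ∑ i : Fin (n + 1), X i * ω (Function.update w ⟨0, hp⟩ (Pi.single i 1)) = 0}
  add_mem' := by
    rintro a b ⟨ha1, ha2⟩ ⟨hb1, hb2⟩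
    refine ⟨fun v d hd => ?_, fun hp w => ?_⟩
    · simp [AlternatingMap.add_apply, map_add, ha1 v d hd, hb1 v d hd]
    · simp only [AlternatingMap.add_apply, mul_add]
      rw [Finset.sum_add_distrib, ha2 hp w, hb2 hp w, add_zero]
  zero_mem' := by
    refine ⟨fun v d hd => ?_, fun hp w => ?_⟩ <;> simp
  smul_mem' := by
    rintro c a ⟨h1, h2⟩
    refine ⟨fun v d hd => ?_, fun hp w => ?_⟩
    · simp [AlternatingMap.smul_apply, h1 v d hd]
    · simp only [AlternatingMap.smul_apply, mul_smul_comm]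
      rw [← Finset.smul_sum, h2 hp w, smul_zero]

/-!
`H0model` consists of the `p`-forms with coefficients homogeneous of degree `m - p` that are
killed by the contraction `ι_E` with the Euler field `E = ∑ xᵢ ∂ᵢ`; on coefficient families `ι_E`
is the Koszul differential. Cartan's formula `ι_E d + d ι_E = L_E`, where `L_E = t + p` on
`p`-forms with coefficients of degree `t` by Euler's identity, makes the Koszul complex exact in
positive degree. Hence the kernels `Z(p, t)` satisfy
`dim Z(p + 1, t) + dim Z(p, t + 1) = C(n + 1, p + 1) · C(n + t, t)`, and induction on `p` gives
`dim Z(p, m - p) = C(m - 1, p) · C(m + n - p, m)`. The `hⁿ` clause is Serre duality.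
-/

open Finset

theorem Finset.sum_sum_erase_eq_zero_of_antisymm {ι M : Type*} [DecidableEq ι] [AddCommGroup M]
    {s : Finset ι} {F : ι → ι → M} (hF : ∀ i ∈ s, ∀ k ∈ s, i ≠ k → F i k = -F k i) :
    ∑ i ∈ s, ∑ k ∈ s.erase i, F i k = 0 := by
  rw [sum_sigma']
  refine sum_involution (fun x _ => ⟨x.2, x.1⟩) (fun x hx => ?_) (fun x hx _ => ?_)
    (fun x hx => ?_) (fun _ _ => rfl)
  all_goals obtain ⟨hi, hk⟩ := mem_sigma.mp hx; obtain ⟨hki, hk⟩ := mem_erase.mp hk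
  · rw [hF _ hi _ hk (Ne.symm hki), neg_add_cancel]
  · exact fun h => hki (congrArg Sigma.fst h)
  · exact mem_sigma.mpr ⟨hk, mem_erase.mpr ⟨Ne.symm hki, hi⟩⟩

theorem Nat.choose_mul_choose_add_choose_mul_choose (N p u : ℕ) :
    (p + u + 1).choose (p + 1) * (N + u).choose (p + u + 2)
      + (p + u + 1).choose p * (N + u + 1).choose (p + u + 2)
      = N.choose (p + 1) * (N + u).choose (u + 1) := by
  obtain _ | n := N
  · simp [Nat.choose_eq_zero_of_lt (show u < p + u + 2 by omega),
      Nat.choose_eq_zero_of_lt (show u + 1 < p + u + 2 by omega)]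
  have h1 := Nat.choose_mul (n := n + 1 + u) (k := p + u + 2) (s := u + 1) (by omega)
  have h2 := Nat.choose_mul (n := n + 1 + u) (k := p + u + 1) (s := u + 1) (by omega)
  rw [show n + 1 + u - (u + 1) = n by omega, show p + u + 2 - (u + 1) = p + 1 by omega] at h1
  rw [show n + 1 + u - (u + 1) = n by omega, show p + u + 1 - (u + 1) = p by omega] at h2
  calc _ = ((p + u + 1).choose p + (p + u + 1).choose (p + 1)) * (n + 1 + u).choose (p + u + 2)
        + (p + u + 1).choose p * (n + 1 + u).choose (p + u + 1) := by
        rw [Nat.choose_succ_succ' (n + 1 + u) (p + u + 1)]; ring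
    _ = (n + 1 + u).choose (p + u + 2) * (p + u + 2).choose (u + 1)
        + (n + 1 + u).choose (p + u + 1) * (p + u + 1).choose (u + 1) := by
        rw [← Nat.choose_succ_succ',
          Nat.choose_symm_of_eq_add (show p + u + 1 + 1 = (p + 1) + (u + 1) by omega),
          Nat.choose_symm_of_eq_add (show p + u + 1 = p + (u + 1) by omega)]
        ring
    _ = _ := by rw [h1, h2, Nat.choose_succ_succ' n p]; ring

section SubmodulePi

variable {ι K V : Type*}

def Submodule.piUnivEquiv [Semiring K] [AddCommMonoid V] [Module K V] (q : ι → Submodule K V) :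
    Submodule.pi Set.univ q ≃ₗ[K] Π i, q i where
  toFun f i := ⟨f.1 i, f.2 i trivial⟩
  invFun g := ⟨fun i => g i, fun i _ => (g i).2⟩
  map_add' _ _ := rfl
  map_smul' _ _ := rfl
  left_inv _ := rfl
  right_inv _ := rfl

variable [Field K] [AddCommGroup V] [Module K V] (q : ι → Submodule K V) [Fintype ι]
  [∀ i, FiniteDimensional K (q i)]

instance : FiniteDimensional K (Submodule.pi Set.univ q) :=
  (Submodule.piUnivEquiv q).symm.finiteDimensional

theorem Submodule.finrank_pi_univ :
    Module.finrank K (Submodule.pi Set.univ q) = ∑ i, Module.finrank K (q i) := by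
  rw [LinearEquiv.finrank_eq (Submodule.piUnivEquiv q), Module.finrank_pi_fintype]

end SubmodulePi

namespace MvPolynomial

theorem isHomogeneous_iff_homogeneousComponent_eq_zero {σ R : Type*} [CommSemiring R]
    {φ : MvPolynomial σ R} {t : ℕ} :
    φ.IsHomogeneous t ↔ ∀ d ≠ t, homogeneousComponent d φ = 0 := by
  refine ⟨fun h d hd => by rw [homogeneousComponent_of_mem h, if_neg hd], fun h => ?_⟩
  rw [← sum_homogeneousComponent φ]
  refine IsHomogeneous.sum _ _ _ fun d _ => ?_
  by_cases hd : d = t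
  · exact hd ▸ homogeneousComponent_isHomogeneous d φ
  · rw [h d hd]
    exact isHomogeneous_zero σ R t

theorem finrank_homogeneousSubmodule {σ K : Type*} [Fintype σ] [DecidableEq σ] [Field K] (t : ℕ) :
    Module.finrank K (homogeneousSubmodule σ K t) = (Fintype.card σ + t - 1).choose t := by
  have hset : {d : σ →₀ ℕ | d.degree = t}
      = ((univ : Finset σ).finsuppAntidiag t : Set (σ →₀ ℕ)) := by
    ext d
    simp [Finsupp.degree_eq_sum]
  rw [homogeneousSubmodule_eq_finsupp_supported, hset,
    LinearEquiv.finrank_eq (AddMonoidAlgebra.supportedEquivFinsupp _), Module.finrank_finsupp_self,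
    ← Nat.card_eq_fintype_card, Nat.card_coe_set_eq, Set.ncard_coe_finset,
    card_finsuppAntidiag_nat_eq_choose, card_univ]

end MvPolynomial

namespace Bott

section KoszulSign

variable {σ R : Type*} [LinearOrder σ] [CommRing R]

/-- For `i ∉ J`, `dxᵢ ∧ dx_J = koszulSign J i • dx_{insert i J}`. -/
def koszulSign (J : Finset σ) (i : σ) : R := (-1) ^ #{j ∈ J | j < i}

lemma koszulSign_mul_self (J : Finset σ) (i : σ) :
    koszulSign J i * koszulSign J i = (1 : R) := by
  rw [koszulSign, ← pow_add, ← two_mul, pow_mul, neg_one_sq, one_pow]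

lemma koszulSign_insert {J : Finset σ} {a : σ} (ha : a ∉ J) (b : σ) :
    koszulSign (insert a J) b = (if a < b then -1 else 1) * (koszulSign J b : R) := by
  unfold koszulSign
  rw [filter_insert]
  split_ifs with hab
  · rw [card_insert_of_notMem fun h => ha (mem_filter.mp h).1, pow_succ, mul_comm]
  · rw [one_mul]

lemma koszulSign_insert_self {J : Finset σ} {i : σ} (hi : i ∉ J) :
    koszulSign (insert i J) i = (koszulSign J i : R) := by
  rw [koszulSign_insert hi, if_neg (lt_irrefl i), one_mul]

lemma koszulSign_erase_self (J : Finset σ) (i : σ) :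
    koszulSign (J.erase i) i = (koszulSign J i : R) := by
  by_cases hi : i ∈ J
  · conv_rhs => rw [← insert_erase hi]
    rw [koszulSign_insert_self (notMem_erase i J)]
  · rw [erase_eq_of_notMem hi]

lemma koszulSign_mul_insert_antisymm {J : Finset σ} {i k : σ} (hi : i ∉ J) (hk : k ∉ J)
    (hik : i ≠ k) :
    koszulSign J i * koszulSign (insert i J) k
      = -(koszulSign J k * (koszulSign (insert k J) i : R)) := by
  rw [koszulSign_insert hi, koszulSign_insert hk]
  rcases hik.lt_or_gt with h | h <;> simp [h, h.not_gt] <;> ring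

lemma koszulSign_mul_insert_eq_neg_mul_erase {J : Finset σ} {i k : σ} (hi : i ∉ J) (hk : k ∈ J) :
    koszulSign J i * koszulSign (insert i J) k
      = -(koszulSign J k * (koszulSign (J.erase k) i : R)) := by
  have hik : i ≠ k := (ne_of_mem_of_not_mem hk hi).symm
  conv_lhs => rw [← insert_erase hk]
  rw [koszulSign_insert (notMem_erase k J), insert_erase hk, koszulSign_insert hi]
  rcases hik.lt_or_gt with h | h <;> simp [h, h.not_gt] <;> ring

end KoszulSign

section Operators

variable {σ R : Type*} [CommRing R]

/-- A family `f` stands for the differential form `∑ I, f I dx_I`, where `dx_I` is the wedge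
product of the `dxᵢ`, `i ∈ I`, in increasing order. -/
abbrev PolyForm (σ R : Type*) [CommRing R] : Type _ := Finset σ → MvPolynomial σ R

variable (σ R) in
noncomputable def homogeneousForms (p t : ℕ) : Submodule R (PolyForm σ R) :=
  Submodule.pi Set.univ fun I => if #I = p then homogeneousSubmodule σ R t else ⊥

lemma mem_homogeneousForms {p t : ℕ} {f : PolyForm σ R} :
    f ∈ homogeneousForms σ R p t ↔ (∀ I, #I ≠ p → f I = 0) ∧ ∀ I, (f I).IsHomogeneous t := by
  simp only [homogeneousForms, Submodule.mem_pi, Set.mem_univ, true_implies]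
  refine ⟨fun h => ⟨fun I hI => by simpa [hI] using h I, fun I => ?_⟩, fun ⟨h0, hh⟩ I => ?_⟩
  · by_cases hI : #I = p
    · simpa [hI] using h I
    · simpa [(by simpa [hI] using h I : f I = 0)] using isHomogeneous_zero σ R t
  · split_ifs with hI
    · exact hh I
    · exact (Submodule.mem_bot R).mpr (h0 I hI)

variable [LinearOrder σ]

variable (σ R) in
noncomputable def exteriorDerivative : PolyForm σ R →ₗ[R] PolyForm σ R where
  toFun f K := ∑ i ∈ K, (koszulSign K i : R) • pderiv i (f (K.erase i))
  map_add' f g := by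
    funext K
    simp [smul_add, sum_add_distrib]
  map_smul' c f := by
    funext K
    simp only [Pi.smul_apply, RingHom.id_apply, smul_sum, Derivation.map_smul]
    exact sum_congr rfl fun i _ => smul_comm _ _ _

lemma exteriorDerivative_apply (f : PolyForm σ R) (K : Finset σ) :
    exteriorDerivative σ R f K = ∑ i ∈ K, (koszulSign K i : R) • pderiv i (f (K.erase i)) := rfl

lemma exteriorDerivative_mem_homogeneousForms {p t : ℕ} {f : PolyForm σ R}
    (hf : f ∈ homogeneousForms σ R p (t + 1)) :
    exteriorDerivative σ R f ∈ homogeneousForms σ R (p + 1) t := by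
  obtain ⟨hsupp, hhom⟩ := mem_homogeneousForms.mp hf
  refine mem_homogeneousForms.mpr ⟨fun K hK => sum_eq_zero fun i hi => ?_, fun K => ?_⟩
  · rw [hsupp _ (by rw [card_erase_of_mem hi]; have := card_pos.mpr ⟨i, hi⟩; omega), map_zero,
      smul_zero]
  · refine IsHomogeneous.sum _ _ _ fun i _ => ?_
    rw [smul_eq_C_mul]
    simpa using (isHomogeneous_C σ _).mul ((hhom _).pderiv (i := i))

variable [Fintype σ]

variable (σ R) in
noncomputable def eulerContraction : PolyForm σ R →ₗ[R] PolyForm σ R where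
  toFun f J := ∑ i ∈ Jᶜ, (koszulSign J i : R) • (X i * f (insert i J))
  map_add' f g := by
    funext J
    simp [mul_add, smul_add, sum_add_distrib]
  map_smul' c f := by
    funext J
    simp only [Pi.smul_apply, RingHom.id_apply, smul_sum, mul_smul_comm]
    exact sum_congr rfl fun i _ => smul_comm _ _ _

lemma eulerContraction_apply (f : PolyForm σ R) (J : Finset σ) :
    eulerContraction σ R f J = ∑ i ∈ Jᶜ, (koszulSign J i : R) • (X i * f (insert i J)) := rfl

lemma eulerContraction_eulerContraction (f : PolyForm σ R) :
    eulerContraction σ R (eulerContraction σ R f) = 0 := by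
  funext J
  simp only [eulerContraction_apply, compl_insert, smul_sum, mul_sum, Pi.zero_apply]
  refine sum_sum_erase_eq_zero_of_antisymm fun i hi k hk hik => ?_
  rw [mem_compl] at hi hk
  rw [mul_smul_comm, mul_smul_comm, smul_smul, smul_smul, insert_comm,
    koszulSign_mul_insert_antisymm hi hk hik, neg_smul, mul_left_comm (X i)]

lemma eulerContraction_exteriorDerivative_apply (f : PolyForm σ R) (J : Finset σ) :
    eulerContraction σ R (exteriorDerivative σ R f) J
      = ∑ i ∈ Jᶜ, X i * pderiv i (f J)
        + ∑ i ∈ Jᶜ, ∑ k ∈ J, (koszulSign J i * koszulSign (insert i J) k : R) •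
            (X i * pderiv k (f (insert i (J.erase k)))) := by
  rw [eulerContraction_apply, ← sum_add_distrib]
  refine sum_congr rfl fun i hi => ?_
  have hiJ : i ∉ J := mem_compl.mp hi
  rw [exteriorDerivative_apply, sum_insert hiJ, erase_insert hiJ, koszulSign_insert_self hiJ,
    mul_add, smul_add, mul_smul_comm, smul_smul, koszulSign_mul_self, one_smul, mul_sum,
    smul_sum]
  congr 1
  refine sum_congr rfl fun k hk => ?_
  rw [erase_insert_of_ne (ne_of_mem_of_not_mem hk hiJ).symm, mul_smul_comm, smul_smul]

lemma exteriorDerivative_eulerContraction_apply (f : PolyForm σ R) (J : Finset σ) :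
    exteriorDerivative σ R (eulerContraction σ R f) J
      = ∑ k ∈ J, (f J + X k * pderiv k (f J))
        - ∑ i ∈ Jᶜ, ∑ k ∈ J, (koszulSign J i * koszulSign (insert i J) k : R) •
            (X i * pderiv k (f (insert i (J.erase k)))) := by
  rw [exteriorDerivative_apply, sum_comm (s := Jᶜ), ← sum_sub_distrib]
  refine sum_congr rfl fun k hk => ?_
  have hkc : k ∉ Jᶜ := by simpa using hk
  rw [eulerContraction_apply, compl_erase, sum_insert hkc, insert_erase hk, koszulSign_erase_self,
    map_add, smul_add, Derivation.map_smul, smul_smul, koszulSign_mul_self, one_smul, pderiv_mul,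
    pderiv_X_self, one_mul, map_sum, smul_sum, sub_eq_add_neg, ← sum_neg_distrib]
  congr 1
  refine sum_congr rfl fun i hi => ?_
  rw [Derivation.map_smul, smul_smul, pderiv_mul, pderiv_X_of_ne (ne_of_mem_of_not_mem hi hkc),
    zero_mul, zero_add, koszulSign_mul_insert_eq_neg_mul_erase (mem_compl.mp hi) hk, neg_smul,
    neg_neg]

/-- Cartan's formula `ι_E d + d ι_E = L_E`. -/
lemma eulerContraction_exteriorDerivative_add_apply (f : PolyForm σ R) (J : Finset σ) :
    eulerContraction σ R (exteriorDerivative σ R f) J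
        + exteriorDerivative σ R (eulerContraction σ R f) J
      = ∑ i, X i * pderiv i (f J) + #J • f J := by
  rw [eulerContraction_exteriorDerivative_apply, exteriorDerivative_eulerContraction_apply,
    sum_add_distrib, sum_const, ← sum_compl_add_sum J]
  abel

lemma eulerContraction_exteriorDerivative_add_eq_smul {p t : ℕ} {f : PolyForm σ R}
    (hf : f ∈ homogeneousForms σ R p t) :
    eulerContraction σ R (exteriorDerivative σ R f)
        + exteriorDerivative σ R (eulerContraction σ R f) = ((t + p : ℕ) : R) • f := by
  obtain ⟨hsupp, hhom⟩ := mem_homogeneousForms.mp hf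
  funext J
  rw [Pi.add_apply, eulerContraction_exteriorDerivative_add_apply, (hhom J).sum_X_mul_pderiv,
    Pi.smul_apply]
  by_cases hJ : #J = p
  · rw [hJ, ← add_smul, Nat.cast_smul_eq_nsmul]
  · simp [hsupp J hJ]

lemma eulerContraction_mem_homogeneousForms {p t : ℕ} {f : PolyForm σ R}
    (hf : f ∈ homogeneousForms σ R (p + 1) t) :
    eulerContraction σ R f ∈ homogeneousForms σ R p (t + 1) := by
  obtain ⟨hsupp, hhom⟩ := mem_homogeneousForms.mp hf
  refine mem_homogeneousForms.mpr ⟨fun J hJ => sum_eq_zero fun i hi => ?_, fun J => ?_⟩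
  · rw [hsupp _ (by rw [card_insert_of_notMem (mem_compl.mp hi)]; omega), mul_zero, smul_zero]
  · refine IsHomogeneous.sum _ _ _ fun i _ => ?_
    rw [smul_eq_C_mul]
    simpa [add_comm] using (isHomogeneous_C σ _).mul ((isHomogeneous_X R i).mul (hhom _))

lemma eulerContraction_eq_zero_of_card_ne_zero {f : PolyForm σ R}
    (hf : ∀ I, #I ≠ 0 → f I = 0) : eulerContraction σ R f = 0 :=
  funext fun J => sum_eq_zero fun i hi => by
    rw [hf _ (by simp [card_insert_of_notMem (mem_compl.mp hi)]), mul_zero, smul_zero]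

variable (σ R) in
/-- `Z(p, t)`, the model of `H⁰(ℙ(σ → R), Ωᵖ(p + t))`. -/
noncomputable def eulerKernel (p t : ℕ) : Submodule R (PolyForm σ R) :=
  homogeneousForms σ R p t ⊓ LinearMap.ker (eulerContraction σ R)

lemma eulerKernel_le_homogeneousForms {p t : ℕ} :
    eulerKernel σ R p t ≤ homogeneousForms σ R p t :=
  inf_le_left

end Operators

section Dimension

variable {σ K : Type*} [LinearOrder σ] [Fintype σ] [Field K]

instance (p t : ℕ) (I : Finset σ) :
    FiniteDimensional K ↥(if #I = p then homogeneousSubmodule σ K t else ⊥) := by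
  by_cases hI : #I = p
  · rw [if_pos hI]
    exact Module.Finite.iff_fg.mpr (homogeneousSubmodule_fg σ K t)
  · rw [if_neg hI]
    infer_instance

instance (p t : ℕ) : FiniteDimensional K (homogeneousForms σ K p t) := by
  unfold homogeneousForms
  infer_instance

lemma finrank_homogeneousForms (p t : ℕ) :
    Module.finrank K (homogeneousForms σ K p t)
      = (Fintype.card σ).choose p * (Fintype.card σ + t - 1).choose t := by
  have hI (I : Finset σ) : Module.finrank K ↥(if #I = p then homogeneousSubmodule σ K t else ⊥)
      = if #I = p then (Fintype.card σ + t - 1).choose t else 0 := by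
    by_cases hI : #I = p
    · rw [if_pos hI, if_pos hI, finrank_homogeneousSubmodule]
    · rw [if_neg hI, if_neg hI, finrank_bot]
  rw [homogeneousForms, Submodule.finrank_pi_univ, sum_congr rfl fun I _ => hI I, ← sum_filter,
    sum_const, ← powerset_univ, ← powersetCard_eq_filter, card_powersetCard, card_univ, smul_eq_mul]

lemma eulerKernel_zero (t : ℕ) : eulerKernel σ K 0 t = homogeneousForms σ K 0 t :=
  inf_eq_left.mpr fun _ hf =>
    LinearMap.mem_ker.mpr (eulerContraction_eq_zero_of_card_ne_zero (mem_homogeneousForms.mp hf).1)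

variable [CharZero K]

lemma range_eulerContraction_domRestrict (p t : ℕ) :
    LinearMap.range ((eulerContraction σ K).domRestrict (homogeneousForms σ K (p + 1) t))
      = eulerKernel σ K p (t + 1) := by
  refine le_antisymm ?_ fun g hg => ?_
  · rintro _ ⟨⟨f, hf⟩, rfl⟩
    exact ⟨eulerContraction_mem_homogeneousForms hf,
      LinearMap.mem_ker.mpr (eulerContraction_eulerContraction f)⟩
  obtain ⟨hg, hker⟩ := hg
  have hcartan := eulerContraction_exteriorDerivative_add_eq_smul hg
  rw [LinearMap.mem_ker.mp hker, map_zero, add_zero] at hcartan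
  have hc : ((t + 1 + p : ℕ) : K) ≠ 0 := Nat.cast_ne_zero.mpr (by omega)
  refine ⟨⟨((t + 1 + p : ℕ) : K)⁻¹ • exteriorDerivative σ K g,
    Submodule.smul_mem _ _ (exteriorDerivative_mem_homogeneousForms hg)⟩, ?_⟩
  rw [LinearMap.domRestrict_apply, map_smul, hcartan, smul_smul, inv_mul_cancel₀ hc, one_smul]

lemma finrank_eulerKernel_add (p t : ℕ) :
    Module.finrank K (eulerKernel σ K (p + 1) t) + Module.finrank K (eulerKernel σ K p (t + 1))
      = Module.finrank K (homogeneousForms σ K (p + 1) t) := by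
  have hker : Submodule.comap (homogeneousForms σ K (p + 1) t).subtype (eulerKernel σ K (p + 1) t)
      = LinearMap.ker ((eulerContraction σ K).domRestrict (homogeneousForms σ K (p + 1) t)) := by
    rw [LinearMap.ker_domRestrict, eulerKernel, Submodule.comap_inf, Submodule.comap_subtype_self,
      top_inf_eq]
  have h := LinearMap.finrank_range_add_finrank_ker
    ((eulerContraction σ K).domRestrict (homogeneousForms σ K (p + 1) t))
  rw [range_eulerContraction_domRestrict, ← hker,
    LinearEquiv.finrank_eq (Submodule.comapSubtypeEquivOfLe eulerKernel_le_homogeneousForms)] at h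
  omega

theorem finrank_eulerKernel (p u : ℕ) :
    Module.finrank K (eulerKernel σ K p (u + 1))
      = (p + u).choose p * (Fintype.card σ + u).choose (p + u + 1) := by
  induction p generalizing u with
  | zero =>
    rw [eulerKernel_zero, finrank_homogeneousForms]
    simp [add_comm u 1, ← add_assoc]
  | succ p ih =>
    have h := finrank_eulerKernel_add (σ := σ) (K := K) p (u + 1)
    have hid := Nat.choose_mul_choose_add_choose_mul_choose (Fintype.card σ) p u
    rw [ih, finrank_homogeneousForms,
      show Fintype.card σ + (u + 1) - 1 = Fintype.card σ + u by omega] at h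
    ring_nf at h hid ⊢
    omega

end Dimension

section Alternating

variable {σ R N : Type*} [LinearOrder σ] [CommRing R] [AddCommGroup N] [Module R N]

lemma card_filter_lt_orderEmbOfFin {r : ℕ} (I : Finset σ) (h : #I = r) (l : Fin r) :
    #{y ∈ I | y < I.orderEmbOfFin h l} = l := by
  have himage : {y ∈ I | y < I.orderEmbOfFin h l}
      = (Iio l).map (I.orderEmbOfFin h).toEmbedding := by
    ext y
    simp only [mem_filter, mem_map, mem_Iio, RelEmbedding.coe_toEmbedding]
    refine ⟨fun ⟨hy, hlt⟩ => ?_, ?_⟩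
    · obtain ⟨j, rfl⟩ : y ∈ Set.range (I.orderEmbOfFin h) := by
        rwa [range_orderEmbOfFin]
      exact ⟨j, (I.orderEmbOfFin h).lt_iff_lt.mp hlt, rfl⟩
    · rintro ⟨j, hj, rfl⟩
      exact ⟨orderEmbOfFin_mem I h j, (I.orderEmbOfFin h).lt_iff_lt.mpr hj⟩
  rw [himage, card_map, Fin.card_Iio]

lemma vecCons_orderEmbOfFin {q : ℕ} {J : Finset σ} {i : σ} (hJ : #J = q)
    (hins : #(insert i J) = q + 1) :
    ∃ k : Fin (q + 1), (k : ℕ) = #{j ∈ J | j < i} ∧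
      Matrix.vecCons i (J.orderEmbOfFin hJ)
        = (insert i J).orderEmbOfFin hins ∘ (k.cycleRange).symm := by
  obtain ⟨k, hk⟩ : i ∈ Set.range ((insert i J).orderEmbOfFin hins) := by
    simp [range_orderEmbOfFin]
  have hsucc : (insert i J).orderEmbOfFin hins ∘ k.succAbove = J.orderEmbOfFin hJ := by
    refine orderEmbOfFin_unique hJ (fun l => ?_) ((OrderEmbedding.strictMono _).comp
      (Fin.strictMono_succAbove k))
    refine mem_of_mem_insert_of_ne (orderEmbOfFin_mem _ hins _) fun h => ?_
    exact Fin.succAbove_ne k l (((insert i J).orderEmbOfFin hins).injective (h.trans hk.symm))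
  refine ⟨k, ?_, funext fun j => Fin.cases ?_ (fun l => ?_) j⟩
  · rw [← card_filter_lt_orderEmbOfFin _ hins k, hk, filter_insert, if_neg (lt_irrefl i)]
  · simp [hk]
  · simp [Fin.cycleRange_symm_succ, ← hsucc]

def sortedBasis {p : ℕ} (I : Finset σ) (h : #I = p) : Fin p → σ → R :=
  fun j => Pi.single (I.orderEmbOfFin h j) 1

lemma units_neg_one_pow_smul (k : ℕ) (x : N) : ((-1 : ℤˣ) ^ k) • x = ((-1 : R) ^ k) • x := by
  rw [Units.smul_def, ← Int.cast_smul_eq_zsmul R]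
  push_cast
  rfl

lemma alternatingMap_vecCons_sortedBasis {q : ℕ} (ω : (σ → R) [⋀^Fin (q + 1)]→ₗ[R] N)
    {J : Finset σ} {i : σ} (hJ : #J = q) (hins : #(insert i J) = q + 1) :
    ω (Matrix.vecCons (Pi.single i 1) (sortedBasis J hJ))
      = (koszulSign J i : R) • ω (sortedBasis (insert i J) hins) := by
  obtain ⟨k, hk, hcons⟩ := vecCons_orderEmbOfFin hJ hins
  have hvec : Matrix.vecCons (Pi.single i (1 : R)) (sortedBasis J hJ)
      = sortedBasis (insert i J) hins ∘ (k.cycleRange).symm := by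
    change _ = fun j => Pi.single (((insert i J).orderEmbOfFin hins ∘ (k.cycleRange).symm) j) 1
    rw [← hcons]
    funext j
    refine Fin.cases ?_ (fun l => ?_) j <;> simp [sortedBasis]
  rw [hvec, AlternatingMap.map_perm, Equiv.Perm.sign_symm, Fin.sign_cycleRange,
    units_neg_one_pow_smul (R := R), hk, koszulSign]

lemma alternatingMap_vecCons_sortedBasis_of_mem {q : ℕ} (ω : (σ → R) [⋀^Fin (q + 1)]→ₗ[R] N)
    {J : Finset σ} {i : σ} (hi : i ∈ J) (hJ : #J = q) :
    ω (Matrix.vecCons (Pi.single i 1) (sortedBasis J hJ)) = 0 := by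
  obtain ⟨l, hl⟩ : i ∈ Set.range (J.orderEmbOfFin hJ) := by simpa [range_orderEmbOfFin] using hi
  exact ω.map_eq_zero_of_eq _ (i := 0) (j := l.succ) (by simp [sortedBasis, hl])
    (Fin.succ_ne_zero l).symm

variable (σ R) in
noncomputable def formCoeffs (p : ℕ) :
    ((σ → R) [⋀^Fin p]→ₗ[R] MvPolynomial σ R) →ₗ[R] PolyForm σ R where
  toFun ω I := if h : #I = p then ω (sortedBasis I h) else 0
  map_add' ω η := by
    funext I
    by_cases h : #I = p <;> simp [h]
  map_smul' c ω := by
    funext I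
    by_cases h : #I = p <;> simp [h]

lemma formCoeffs_apply_of_card_eq {p : ℕ} (ω : (σ → R) [⋀^Fin p]→ₗ[R] MvPolynomial σ R)
    {I : Finset σ} (h : #I = p) : formCoeffs σ R p ω I = ω (sortedBasis I h) := dif_pos h

lemma formCoeffs_apply_of_card_ne {p : ℕ} (ω : (σ → R) [⋀^Fin p]→ₗ[R] MvPolynomial σ R)
    {I : Finset σ} (h : #I ≠ p) : formCoeffs σ R p ω I = 0 := dif_neg h

variable [Fintype σ]

variable (σ R N) in
noncomputable def alternatingCoeffs (p : ℕ) :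
    ((σ → R) [⋀^Fin p]→ₗ[R] N) ≃ₗ[R] (Set.powersetCard σ p → N) :=
  exteriorPower.alternatingMapLinearEquiv ≪≫ₗ (((Pi.basisFun R σ).exteriorPower p).constr R).symm

lemma alternatingCoeffs_apply {p : ℕ} (ω : (σ → R) [⋀^Fin p]→ₗ[R] N)
    (s : Set.powersetCard σ p) : alternatingCoeffs σ R N p ω s = ω (sortedBasis s.1 s.2) := by
  simp only [alternatingCoeffs, LinearEquiv.trans_apply, Module.Basis.constr_symm_apply,
    exteriorPower.coe_basis, exteriorPower.ιMulti_family, Set.powersetCard.ofFinEmbEquiv_symm_apply,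
    Function.comp_def, Pi.basisFun_apply, exteriorPower.alternatingMapLinearEquiv_apply_ιMulti]
  rfl

lemma apply_mem_of_forall_sortedBasis_mem {p : ℕ} {ω : (σ → R) [⋀^Fin p]→ₗ[R] N}
    {P : Submodule R N} (h : ∀ I (hI : #I = p), ω (sortedBasis I hI) ∈ P) (v : Fin p → σ → R) :
    ω v ∈ P := by
  have hω : exteriorPower.alternatingMapLinearEquiv ω
      = ((Pi.basisFun R σ).exteriorPower p).constr R (alternatingCoeffs σ R N p ω) :=
    (LinearEquiv.symm_apply_eq _).mp rfl
  have hrange := Module.Basis.constr_range ((Pi.basisFun R σ).exteriorPower p) R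
    (f := alternatingCoeffs σ R N p ω)
  rw [← exteriorPower.alternatingMapLinearEquiv_apply_ιMulti, hω]
  refine Submodule.span_le.mpr ?_ (hrange ▸ LinearMap.mem_range_self _ _)
  rintro _ ⟨s, rfl⟩
  rw [alternatingCoeffs_apply]
  exact h _ _

lemma formCoeffs_injective (p : ℕ) : Function.Injective (formCoeffs σ R p) := by
  intro ω η h
  refine (alternatingCoeffs σ R _ p).injective (funext fun s => ?_)
  have hs : #s.1 = p := s.2
  rw [alternatingCoeffs_apply, alternatingCoeffs_apply, ← formCoeffs_apply_of_card_eq _ hs,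
    ← formCoeffs_apply_of_card_eq _ hs, h]

lemma exists_formCoeffs_eq {p : ℕ} {f : PolyForm σ R} (hf : ∀ I, #I ≠ p → f I = 0) :
    ∃ ω, formCoeffs σ R p ω = f := by
  refine ⟨(alternatingCoeffs σ R _ p).symm fun s => f s.1, funext fun I => ?_⟩
  by_cases hI : #I = p
  · rw [formCoeffs_apply_of_card_eq _ hI, ← alternatingCoeffs_apply (s := ⟨I, hI⟩),
      LinearEquiv.apply_symm_apply]
  · rw [formCoeffs_apply_of_card_ne _ hI, hf I hI]

noncomputable def contractEuler {q : ℕ} (ω : (σ → R) [⋀^Fin (q + 1)]→ₗ[R] MvPolynomial σ R) :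
    (σ → R) [⋀^Fin q]→ₗ[R] MvPolynomial σ R :=
  ∑ i, (X i : MvPolynomial σ R) • ω.curryLeft (Pi.single i 1)

lemma contractEuler_apply {q : ℕ} (ω : (σ → R) [⋀^Fin (q + 1)]→ₗ[R] MvPolynomial σ R)
    (v : Fin q → σ → R) :
    contractEuler ω v = ∑ i, X i * ω (Matrix.vecCons (Pi.single i 1) v) :=
  map_sum (AddMonoidHom.mk'
    (fun η : (σ → R) [⋀^Fin q]→ₗ[R] MvPolynomial σ R => η v) fun _ _ => rfl) _ _

lemma formCoeffs_contractEuler {q : ℕ} (ω : (σ → R) [⋀^Fin (q + 1)]→ₗ[R] MvPolynomial σ R) :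
    formCoeffs σ R q (contractEuler ω) = eulerContraction σ R (formCoeffs σ R (q + 1) ω) := by
  funext J
  rw [eulerContraction_apply]
  by_cases hJ : #J = q
  · rw [formCoeffs_apply_of_card_eq _ hJ, contractEuler_apply, ← sum_compl_add_sum J,
      sum_eq_zero (s := J) fun i hi => by
        rw [alternatingMap_vecCons_sortedBasis_of_mem ω hi hJ, mul_zero], add_zero]
    refine sum_congr rfl fun i hi => ?_
    have hins : #(insert i J) = q + 1 := by rw [card_insert_of_notMem (mem_compl.mp hi), hJ]
    rw [alternatingMap_vecCons_sortedBasis ω hJ hins, formCoeffs_apply_of_card_eq _ hins,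
      mul_smul_comm]
  · rw [formCoeffs_apply_of_card_ne _ hJ]
    refine (sum_eq_zero fun i hi => ?_).symm
    rw [formCoeffs_apply_of_card_ne _ (by rw [card_insert_of_notMem (mem_compl.mp hi)]; omega),
      mul_zero, smul_zero]

lemma forall_update_zero_iff_contractEuler_eq_zero {q : ℕ}
    (ω : (σ → R) [⋀^Fin (q + 1)]→ₗ[R] MvPolynomial σ R) :
    (∀ (hp : 0 < q + 1) (w : Fin (q + 1) → σ → R),
        ∑ i, X i * ω (Function.update w ⟨0, hp⟩ (Pi.single i 1)) = 0)
      ↔ contractEuler ω = 0 := by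
  have hupdate (w : Fin (q + 1) → σ → R) (x : σ → R) :
      Function.update w ⟨0, q.succ_pos⟩ x = Matrix.vecCons x (Fin.tail w) := by
    conv_lhs => rw [← Fin.cons_self_tail w]
    exact Fin.update_cons_zero _ _ _
  simp only [hupdate]
  refine ⟨fun h => AlternatingMap.ext fun u => ?_, fun h _ w => ?_⟩
  · simpa [contractEuler_apply] using h q.succ_pos (Matrix.vecCons 0 u)
  · rw [← contractEuler_apply, h, AlternatingMap.zero_apply]

end Alternating

end Bott

open Bott

lemma mem_H0model_iff {n p : ℕ} {m : ℤ} {t : ℕ} (ht : (t : ℤ) = m - p)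
    (ω : (Fin (n + 1) → ℂ) [⋀^Fin p]→ₗ[ℂ] MvPolynomial (Fin (n + 1)) ℂ) :
    ω ∈ H0model n p m ↔ formCoeffs (Fin (n + 1)) ℂ p ω ∈ eulerKernel (Fin (n + 1)) ℂ p t := by
  have hhom : (∀ (v : Fin p → Fin (n + 1) → ℂ) (d : ℕ), (d : ℤ) ≠ m - p →
      homogeneousComponent d (ω v) = 0) ↔ formCoeffs _ ℂ p ω ∈ homogeneousForms _ ℂ p t := by
    have hcomp (v : Fin p → Fin (n + 1) → ℂ) : (∀ d : ℕ, (d : ℤ) ≠ m - p →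
        homogeneousComponent d (ω v) = 0) ↔ (ω v).IsHomogeneous t := by
      rw [isHomogeneous_iff_homogeneousComponent_eq_zero, ← ht]
      simp only [ne_eq, Nat.cast_inj]
    refine (forall_congr' hcomp).trans
      ⟨fun h => mem_homogeneousForms.mpr
          ⟨fun I hI => formCoeffs_apply_of_card_ne ω hI, fun I => ?_⟩,
        fun h v => apply_mem_of_forall_sortedBasis_mem (P := homogeneousSubmodule _ ℂ t)
          (fun I hI => ?_) v⟩
    · by_cases hI : #I = p
      · rw [formCoeffs_apply_of_card_eq ω hI]
        exact h _
      · rw [formCoeffs_apply_of_card_ne ω hI]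
        exact isHomogeneous_zero _ _ _
    · rw [← formCoeffs_apply_of_card_eq ω hI]
      exact (mem_homogeneousForms.mp h).2 I
  have heuler : (∀ (hp : 0 < p) (w : Fin p → Fin (n + 1) → ℂ),
      ∑ i, X i * ω (Function.update w ⟨0, hp⟩ (Pi.single i 1)) = 0)
      ↔ formCoeffs _ ℂ p ω ∈ LinearMap.ker (eulerContraction _ ℂ) := by
    rw [LinearMap.mem_ker]
    cases p with
    | zero =>
      simp only [lt_irrefl, IsEmpty.forall_iff, true_iff]
      exact eulerContraction_eq_zero_of_card_ne_zero fun I hI => formCoeffs_apply_of_card_ne ω hI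
    | succ q =>
      rw [forall_update_zero_iff_contractEuler_eq_zero, ← formCoeffs_contractEuler,
        map_eq_zero_iff _ (formCoeffs_injective q)]
  exact and_congr hhom heuler

lemma finrank_H0model {n p : ℕ} {m : ℤ} {t : ℕ} (ht : (t : ℤ) = m - p) :
    Module.finrank ℂ (H0model n p m) = Module.finrank ℂ (eulerKernel (Fin (n + 1)) ℂ p t) := by
  have hmap : (H0model n p m).map (formCoeffs _ ℂ p) = eulerKernel _ ℂ p t := by
    ext f
    refine ⟨fun ⟨ω, hω, hf⟩ => hf ▸ (mem_H0model_iff ht ω).mp hω, fun hf => ?_⟩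
    obtain ⟨ω, rfl⟩ :=
      exists_formCoeffs_eq (mem_homogeneousForms.mp (eulerKernel_le_homogeneousForms hf)).1
    exact ⟨ω, (mem_H0model_iff ht ω).mpr hf, rfl⟩
  rw [← hmap]
  exact LinearEquiv.finrank_eq (Submodule.equivMapOfInjective _ (formCoeffs_injective p) _)

theorem stmt_4 (n p : ℕ) (m : ℤ) (hpn : p ≤ n) (hpm : (p : ℤ) < m)
    (h : ℕ → ℕ → ℤ → ℕ)
    (h0 : ∀ (p' : ℕ) (m' : ℤ), h 0 p' m' = Module.finrank ℂ (H0model n p' m'))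
    (hserre : ∀ (q p' : ℕ) (m' : ℤ), p' ≤ n → q ≤ n → h q p' m' = h (n - q) (n - p') (-m')) :
    Module.finrank ℂ (H0model n p m) =
        (m - 1).toNat.choose p * (m + n - p).toNat.choose m.toNat ∧
      h n (n - p) (-m) =
        (m - 1).toNat.choose p * (m + n - p).toNat.choose m.toNat := by
  obtain ⟨u, rfl⟩ : ∃ u : ℕ, m = p + u + 1 := ⟨(m - p - 1).toNat, by omega⟩
  have hdim : Module.finrank ℂ (H0model n p (p + u + 1))
      = (p + u).choose p * (n + u + 1).choose (p + u + 1) := by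
    rw [finrank_H0model (t := u + 1) (by push_cast; ring), finrank_eulerKernel, Fintype.card_fin,
      show n + 1 + u = n + u + 1 by ring]
  rw [show ((p + u + 1 : ℤ) - 1).toNat = p + u by omega,
    show ((p + u + 1 : ℤ) + n - p).toNat = n + u + 1 by omega,
    show ((p + u + 1 : ℤ)).toNat = p + u + 1 by omega]
  refine ⟨hdim, ?_⟩
  rw [hserre n (n - p) _ (Nat.sub_le n p) le_rfl, Nat.sub_self, Nat.sub_sub_self hpn, neg_neg, h0,
    hdim]
end

section
/- Let ζ = e^{2πi/(n+2)}. The singular points of the hypersurface X = {x_0^{n+2} + ... + x_{n+1}^{n+2} − (n+2)·x_0⋯x_{n+1} = 0} ⊂ ℙ^{n+1} are exactly the points [ζ^{a_0} : ζ^{a_1} : ... : ζ^{a_{n-1}} : ζ^{a_n} : 1] with a_0 + ... + a_n ≡ 0 (mod n+2); in particular there are exactly (n+2)^n of them. -/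
/-!
STATEMENT 12: Let `ζ = e^{2πi/(n+2)}`. The singular points of Schoen's hypersurface
`X = {x_0^{n+2} + ... + x_{n+1}^{n+2} − (n+2)·x_0⋯x_{n+1} = 0} ⊂ ℙ^{n+1}` are exactly the
points `[ζ^{a_0} : ... : ζ^{a_n} : 1]` with `a_0 + ... + a_n ≡ 0 (mod n+2)`; in particular
there are exactly `(n+2)^n` of them.
-/

open MvPolynomial

/-- Schoen's polynomial `f = Σ_i x_i^{n+2} − (n+2)·x_0 x_1 ⋯ x_{n+1}`. -/
noncomputable def schoenF (n : ℕ) : MvPolynomial (Fin (n + 2)) ℂ :=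
  (∑ i : Fin (n + 2), X i ^ (n + 2)) - (n + 2 : ℕ) • ∏ i : Fin (n + 2), X i

/-- `ζ = e^{2πi/(n+2)}`. -/
noncomputable def schoenZeta (n : ℕ) : ℂ :=
  Complex.exp (2 * Real.pi * Complex.I / (n + 2))

/-- The singular locus of `X = {f = 0} ⊂ ℙ^{n+1}`: points of `X` where all partial
derivatives of `f` vanish (the conditions are scale-invariant, so they are well-defined
via the chosen representative). -/
noncomputable def schoenSing (n : ℕ) : Set (Projectivization ℂ (Fin (n + 2) → ℂ)) :=
  {p | eval p.rep (schoenF n) = 0 ∧ ∀ i : Fin (n + 2), eval p.rep (pderiv i (schoenF n)) = 0}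

/-- The point `[ζ^{a_0} : ... : ζ^{a_n} : 1] ∈ ℙ^{n+1}`. -/
noncomputable def schoenPoint (n : ℕ) (a : Fin (n + 1) → ℕ) :
    Projectivization ℂ (Fin (n + 2) → ℂ) :=
  Projectivization.mk ℂ (Fin.snoc (fun i => schoenZeta n ^ a i) 1) <| by
    intro h
    have h1 := congrFun h (Fin.last (n + 1))
    simp [Fin.snoc_last] at h1

/-!
Up to the nonzero factor `n + 2`, `∂f/∂x_i = x_i^{n+1} - ∏_{j ≠ i} x_j`, and by Euler's relation
`f` vanishes wherever all these partials do. At such a point no coordinate vanishes (a zero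
coordinate occurs in every product `∏_{j ≠ i} x_j` with `i` different from it), so multiplying
the `i`-th equation by `x_i` gives `x_i^{n+2} = ∏_j x_j` for all `i`. Normalising `x_{n+1} = 1`
makes the `x_i` into `(n+2)`-nd roots of unity `ζ^{a_i}` with product `1`, i.e. `∑ a_i ≡ 0`.
Hence the singular points correspond to the vectors in `(ℤ/(n+2))^{n+1}` with zero sum, and
there are `(n+2)^n` of those.
-/

open Finset

namespace MvPolynomial

variable {R σ : Type*} [CommSemiring R]

theorem pderiv_prod_X_of_notMem {i : σ} {s : Finset σ} (hi : i ∉ s) :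
    pderiv i (∏ j ∈ s, (X j : MvPolynomial σ R)) = 0 := by
  classical
  induction s using Finset.induction with
  | empty => simp
  | insert b t hb ih =>
    rw [prod_insert hb, pderiv_mul, pderiv_X_of_ne (ne_of_mem_of_not_mem (mem_insert_self b t) hi),
      ih fun h => hi (mem_insert_of_mem h), zero_mul, mul_zero, add_zero]

theorem pderiv_prod_X [Fintype σ] [DecidableEq σ] (i : σ) :
    pderiv i (∏ j, (X j : MvPolynomial σ R)) = ∏ j ∈ univ.erase i, X j := by
  rw [← mul_prod_erase _ _ (mem_univ i), pderiv_mul, pderiv_X_self,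
    pderiv_prod_X_of_notMem (notMem_erase i _), one_mul, mul_zero, add_zero]

end MvPolynomial

theorem IsPrimitiveRoot.pow_eq_one_and_prod_eq_one_iff {K ι : Type*} [CommRing K] [IsDomain K]
    [Fintype ι] {ζ : K} {k : ℕ} [NeZero k] (hζ : IsPrimitiveRoot ζ k) (y : ι → K) :
    ((∀ i, y i ^ k = 1) ∧ ∏ i, y i = 1) ↔
      ∃ a : ι → ℕ, (∑ i, a i) % k = 0 ∧ y = fun i => ζ ^ a i := by
  constructor
  · rintro ⟨hpow, hprod⟩
    choose a _ ha using fun i => hζ.eq_pow_of_pow_eq_one (hpow i)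
    obtain rfl : y = fun i => ζ ^ a i := funext fun i => (ha i).symm
    refine ⟨a, Nat.mod_eq_zero_of_dvd ?_, rfl⟩
    rwa [← hζ.pow_eq_one_iff_dvd, ← prod_pow_eq_pow_sum]
  · rintro ⟨a, ha, rfl⟩
    refine ⟨fun i => ?_, ?_⟩
    · rw [← pow_mul, mul_comm, pow_mul, hζ.pow_eq_one, one_pow]
    · rw [prod_pow_eq_pow_sum, hζ.pow_eq_one_iff_dvd]
      exact Nat.dvd_of_mod_eq_zero ha

theorem Projectivization.exists_eq_mk_snoc_one {K : Type*} [Field K] {m : ℕ}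
    (p : Projectivization K (Fin (m + 1) → K)) (hp : p.rep (Fin.last m) ≠ 0) :
    ∃ (y : Fin m → K) (hy : (Fin.snoc y 1 : Fin (m + 1) → K) ≠ 0),
      p = mk K (Fin.snoc y 1) hy := by
  set c := p.rep (Fin.last m)
  have hsnoc : (Fin.snoc (Fin.init (c⁻¹ • p.rep)) 1 : Fin (m + 1) → K) = c⁻¹ • p.rep := by
    conv_lhs => rw [← inv_mul_cancel₀ hp]
    exact Fin.snoc_init_self _
  refine ⟨_, hsnoc ▸ smul_ne_zero (inv_ne_zero hp) p.rep_nonzero, ?_⟩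
  conv_lhs => rw [← p.mk_rep]
  exact (mk_eq_mk_iff' ..).2 ⟨c, by rw [hsnoc, smul_inv_smul₀ hp]⟩

theorem Fin.ncard_sum_eq_zero (G : Type*) [AddCommGroup G] [Finite G] (n : ℕ) :
    {v : Fin (n + 1) → G | ∑ i, v i = 0}.ncard = Nat.card G ^ n := by
  have hrange : Set.range (fun w : Fin n → G => (Fin.snoc w (-∑ i, w i) : Fin (n + 1) → G)) =
      {v | ∑ i, v i = 0} := by
    ext v
    refine ⟨?_, fun (hv : ∑ i, v i = 0) => ⟨Fin.init v, ?_⟩⟩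
    · rintro ⟨w, rfl⟩
      simp [Fin.sum_univ_castSucc]
    · rw [Fin.sum_univ_castSucc] at hv
      conv_rhs => rw [← Fin.snoc_init_self v]
      exact congrArg _ (eq_neg_of_add_eq_zero_right hv).symm
  have hinj : Function.Injective fun w : Fin n → G => (Fin.snoc w (-∑ i, w i) : Fin (n + 1) → G) :=
    fun w w' h => by simpa using congrArg Fin.init h
  rw [← hrange, Set.ncard_range_of_injective hinj, Nat.card_fun, Nat.card_fin]

def SchoenCritical {M : Type*} [CommMonoid M] (n : ℕ) (x : Fin (n + 2) → M) : Prop :=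
  ∀ i, x i ^ (n + 1) = ∏ j ∈ univ.erase i, x j

section CommMonoid

variable {M : Type*} [CommMonoid M] {n : ℕ} {x : Fin (n + 2) → M}

theorem SchoenCritical.pow_eq_prod (h : SchoenCritical n x) (i : Fin (n + 2)) :
    x i ^ (n + 2) = ∏ j, x j := by
  rw [← mul_prod_erase _ _ (mem_univ i), ← h i, pow_succ']

theorem SchoenCritical.smul (h : SchoenCritical n x) (c : M) : SchoenCritical n (c • x) := by
  intro i
  have hcard : #(univ.erase i) = n + 1 := by simp
  simp only [Pi.smul_apply, smul_eq_mul, mul_pow, prod_mul_distrib, prod_const, hcard, h i]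

end CommMonoid

section Field

variable {K : Type*} [Field K] {n : ℕ} {x : Fin (n + 2) → K}

theorem schoenCritical_smul_iff {c : K} (hc : c ≠ 0) :
    SchoenCritical n (c • x) ↔ SchoenCritical n x :=
  ⟨fun h => inv_smul_smul₀ hc x ▸ h.smul c⁻¹, fun h => h.smul c⟩

theorem SchoenCritical.apply_ne_zero (h : SchoenCritical n x) (hx : x ≠ 0) (i : Fin (n + 2)) :
    x i ≠ 0 := by
  intro hi
  refine hx (funext fun j => ?_)
  obtain rfl | hji := eq_or_ne j i
  · exact hi
  · refine pow_eq_zero_iff (n := n + 1) (by omega) |>.1 ?_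
    rw [h j]
    exact prod_eq_zero (mem_erase.2 ⟨hji.symm, mem_univ i⟩) hi

theorem schoenCritical_of_pow_eq_one (hpow : ∀ i, x i ^ (n + 2) = 1) (hprod : ∏ i, x i = 1) :
    SchoenCritical n x := by
  intro i
  have hi : x i ≠ 0 := fun h0 => by simpa [h0] using hpow i
  refine mul_left_cancel₀ hi ?_
  rw [← pow_succ', hpow i, mul_prod_erase _ _ (mem_univ i), hprod]

theorem schoenCritical_snoc_one_iff (y : Fin (n + 1) → K) :
    SchoenCritical n (Fin.snoc y 1) ↔ (∀ i, y i ^ (n + 2) = 1) ∧ ∏ i, y i = 1 := by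
  have hprod : ∏ i, (Fin.snoc y 1 : Fin (n + 2) → K) i = ∏ i, y i := by
    simp [Fin.prod_univ_castSucc]
  constructor
  · intro h
    have h1 : ∏ i, y i = 1 := by
      rw [← hprod, ← h.pow_eq_prod (Fin.last _), Fin.snoc_last, one_pow]
    refine ⟨fun i => ?_, h1⟩
    simpa [hprod, h1] using h.pow_eq_prod i.castSucc
  · rintro ⟨hpow, h1⟩
    refine schoenCritical_of_pow_eq_one (fun i => ?_) (hprod.trans h1)
    induction i using Fin.lastCases with
    | last => simp
    | cast i => simpa using hpow i

end Field

theorem isPrimitiveRoot_schoenZeta (n : ℕ) : IsPrimitiveRoot (schoenZeta n) (n + 2) := by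
  simpa [schoenZeta] using Complex.isPrimitiveRoot_exp (n + 2) (by omega)

theorem eval_schoenF (n : ℕ) (x : Fin (n + 2) → ℂ) :
    eval x (schoenF n) = ∑ i, x i ^ (n + 2) - (n + 2 : ℕ) • ∏ i, x i := by
  simp [schoenF]

theorem eval_pderiv_schoenF (n : ℕ) (x : Fin (n + 2) → ℂ) (i : Fin (n + 2)) :
    eval x (pderiv i (schoenF n)) = (n + 2 : ℕ) • (x i ^ (n + 1) - ∏ j ∈ univ.erase i, x j) := by
  rw [schoenF, map_sub, map_nsmul, pderiv_prod_X, map_sum]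
  simp [pderiv_X, Pi.single_apply, mul_sub]

theorem mem_schoenSing_iff {n : ℕ} (p : Projectivization ℂ (Fin (n + 2) → ℂ)) :
    p ∈ schoenSing n ↔ SchoenCritical n p.rep := by
  have hn : (n + 2 : ℕ) ≠ 0 := by omega
  simp only [schoenSing, Set.mem_ofPred_eq, eval_pderiv_schoenF, smul_eq_zero, hn, false_or,
    sub_eq_zero]
  refine ⟨And.right, fun h => ⟨?_, h⟩⟩
  rw [eval_schoenF, sum_congr rfl fun i _ => h.pow_eq_prod i, sum_const, card_univ,
    Fintype.card_fin, sub_self]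

theorem mem_schoenSing_mk_iff {n : ℕ} {v : Fin (n + 2) → ℂ} (hv : v ≠ 0) :
    Projectivization.mk ℂ v hv ∈ schoenSing n ↔ SchoenCritical n v := by
  obtain ⟨u, hu⟩ := Projectivization.exists_smul_eq_mk_rep ℂ v hv
  rw [mem_schoenSing_iff, ← hu, Units.smul_def, schoenCritical_smul_iff u.ne_zero]

theorem schoenSing_eq (n : ℕ) :
    schoenSing n = {p | ∃ a : Fin (n + 1) → ℕ, (∑ i, a i) % (n + 2) = 0 ∧ p = schoenPoint n a} := by
  have hζ := isPrimitiveRoot_schoenZeta n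
  ext p
  constructor
  · intro hp
    have hcrit := (mem_schoenSing_iff p).1 hp
    obtain ⟨y, hy, rfl⟩ :=
      Projectivization.exists_eq_mk_snoc_one p (hcrit.apply_ne_zero p.rep_nonzero _)
    rw [mem_schoenSing_mk_iff, schoenCritical_snoc_one_iff, hζ.pow_eq_one_and_prod_eq_one_iff] at hp
    obtain ⟨a, ha, rfl⟩ := hp
    exact ⟨a, ha, rfl⟩
  · rintro ⟨a, ha, rfl⟩
    rw [schoenPoint, mem_schoenSing_mk_iff, schoenCritical_snoc_one_iff,
      hζ.pow_eq_one_and_prod_eq_one_iff]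
    exact ⟨a, ha, rfl⟩

theorem schoenPoint_eq_schoenPoint_iff {n : ℕ} {a b : Fin (n + 1) → ℕ} :
    schoenPoint n a = schoenPoint n b ↔ ∀ i, a i ≡ b i [MOD n + 2] := by
  have hζ := isPrimitiveRoot_schoenZeta n
  have hmodEq : ∀ i, a i ≡ b i [MOD n + 2] ↔ schoenZeta n ^ a i = schoenZeta n ^ b i := fun i => by
    rw [(hζ.isOfFinOrder (by omega)).pow_eq_pow_iff_modEq, ← hζ.eq_orderOf]
  simp only [hmodEq, schoenPoint, Projectivization.mk_eq_mk_iff']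
  constructor
  · rintro ⟨c, hc⟩ i
    have hc1 : c = 1 := by simpa using congrFun hc (Fin.last _)
    simpa [hc1] using (congrFun hc i.castSucc).symm
  · intro h
    refine ⟨1, funext fun j => ?_⟩
    induction j using Fin.lastCases with
    | last => simp
    | cast i => simpa using (h i).symm

theorem schoenSing_eq_image (n : ℕ) :
    schoenSing n = (fun v : Fin (n + 1) → ZMod (n + 2) => schoenPoint n fun i => (v i).val) ''
      {v | ∑ i, v i = 0} := by
  rw [schoenSing_eq]
  ext p
  constructor
  · rintro ⟨a, ha, rfl⟩
    refine ⟨fun i => a i, ?_, schoenPoint_eq_schoenPoint_iff.2 fun i => ?_⟩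
    · change ∑ i, ((a i : ℕ) : ZMod (n + 2)) = 0
      rw [← Nat.cast_sum, ZMod.natCast_eq_zero_iff]
      exact Nat.dvd_of_mod_eq_zero ha
    · rw [ZMod.val_natCast]
      exact Nat.mod_modEq _ _
  · rintro ⟨v, hv, rfl⟩
    refine ⟨_, Nat.mod_eq_zero_of_dvd ?_, rfl⟩
    rw [← ZMod.natCast_eq_zero_iff, Nat.cast_sum]
    simpa using hv

theorem injective_schoenPoint_val (n : ℕ) :
    Function.Injective fun v : Fin (n + 1) → ZMod (n + 2) => schoenPoint n fun i => (v i).val :=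
  fun v w h => funext fun i => by
    rw [← ZMod.natCast_zmod_val (v i), ← ZMod.natCast_zmod_val (w i),
      ZMod.natCast_eq_natCast_iff]
    exact schoenPoint_eq_schoenPoint_iff.1 h i

theorem stmt_12 (n : ℕ) :
    schoenSing n =
        {p | ∃ a : Fin (n + 1) → ℕ, (∑ i, a i) % (n + 2) = 0 ∧ p = schoenPoint n a} ∧
      (schoenSing n).ncard = (n + 2) ^ n := by
  refine ⟨schoenSing_eq n, ?_⟩
  rw [schoenSing_eq_image, Set.ncard_image_of_injective _ (injective_schoenPoint_val n),
    Fin.ncard_sum_eq_zero, Nat.card_zmod]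
end

section
/- At each of its singular points, the partial derivative criterion for Schoen's hypersurface f = Σ_i x_i^{n+2} − (n+2)·Π_i x_i forces all coordinates to be (n+2)-nd roots of unity: if p = [z_0 : ... : z_{n+1}] ∈ ℙ^{n+1} satisfies ∂f/∂x_i(p) = 0 for all i and f(p)=0, then (after scaling so z_{n+1}=1) each z_i^{n+2} = 1 and Π_i z_i = 1. -/
/-!
STATEMENT 13: For Schoen's polynomial `f = Σ_i x_i^{n+2} − (n+2)·Π_i x_i` over ℂ
(variables `x_0, ..., x_{n+1}`): if `p = [z_0 : ... : z_{n+1}]` satisfies `f(z) = 0` and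
`∂f/∂x_i(z) = 0` for all `i`, and is scaled so that `z_{n+1} = 1`, then every `z_i` is an
`(n+2)`-nd root of unity and `Π_i z_i = 1`.
-/

open MvPolynomial

lemma pderiv_prod_X {n : ℕ} (i : Fin (n+2)) :
    pderiv i (∏ j : Fin (n+2), (X j : MvPolynomial (Fin (n+2)) ℂ)) =
      ∏ j ∈ Finset.univ.erase i, X j := by
  rw [← Finset.mul_prod_erase Finset.univ _ (Finset.mem_univ i), pderiv_mul, pderiv_X_self,
    pderiv_eq_zero_of_notMem_vars, one_mul, mul_zero, add_zero]
  intro h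
  have h2 := MvPolynomial.vars_prod (f := fun j => (X j : MvPolynomial (Fin (n+2)) ℂ))
    (s := Finset.univ.erase i) h
  simp [vars_X] at h2

theorem stmt_13 (n : ℕ) (z : Fin (n + 2) → ℂ)
    (hscale : z (Fin.last (n + 1)) = 1)
    (hX : eval z (schoenF n) = 0)
    (hsing : ∀ i : Fin (n + 2), eval z (pderiv i (schoenF n)) = 0) :
    (∀ i, z i ^ (n + 2) = 1) ∧ ∏ i, z i = 1 := by
  have key : ∀ i, z i ^ (n + 2) = ∏ j, z j := by
    intro i
    have h := hsing i
    simp only [schoenF, map_sub, map_sum, map_nsmul, pderiv_pow, pderiv_X, pderiv_prod_X,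
      eval_sub, eval_sum, eval_mul, eval_pow, eval_prod, eval_X, smul_eq_mul, Pi.single_apply,
      mul_ite, mul_one, mul_zero, Finset.sum_ite_eq', Finset.mem_univ, if_true] at h
    rw [map_natCast, nsmul_eq_mul, sub_eq_zero] at h
    have hne : ((n + 2 : ℕ) : ℂ) ≠ 0 := Nat.cast_ne_zero.mpr (by omega)
    have h1 : z i ^ (n + 1) = ∏ x ∈ Finset.univ.erase i, z x := by
      have := mul_left_cancel₀ hne h
      simpa using this
    calc z i ^ (n + 2) = z i * z i ^ (n + 1) := by ring
      _ = z i * ∏ x ∈ Finset.univ.erase i, z x := by rw [h1]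
      _ = ∏ j, z j := Finset.mul_prod_erase Finset.univ z (Finset.mem_univ i)
  have hP : ∏ j, z j = 1 := by
    have := key (Fin.last (n + 1))
    rw [hscale, one_pow] at this
    exact this.symm
  exact ⟨fun i => (key i).trans hP, hP⟩
end

section
/- Let π: Ỹ → ℂ^{n+1} be the blow-up of the origin restricted over the affine cone X = {Σ_{i=1}^{n+1} x_i^2 = 0}, giving the resolution Y → X with exceptional divisor Q = {Σ X_i^2 = 0} ⊂ ℙ^n. On the affine chart X_{n+1} = 1 of Y, with coordinates X_1,...,X_n,x_{n+1} subject to X_1^2 + ... + X_n^2 + 1 = 0, the pullback π*Ω_X of the cotangent sheaf is the subsheaf of Ω_Y generated by dx_{n+1} and x_{n+1}·dX_i (i = 1,...,n); equivalently π*Ω_X = Ω_Y(log Q)(−Q) where Q is locally {x_{n+1} = 0}. -/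
/-!
STATEMENT 16: Blow-up chart computation for the ODP.  Let `X = {x_1^2+...+x_{n+1}^2 = 0}`
⊂ ℂ^{n+1}` with coordinate ring `R`, and let the chart `X_{n+1} = 1` of the blow-up `Y`
have coordinate ring `S = ℂ[X_1,...,X_n,x_{n+1}]/(X_1^2+...+X_n^2+1)`, the map `π`
corresponding to `x_i ↦ X_i·x_{n+1}` (`i ≤ n`), `x_{n+1} ↦ x_{n+1}`.  Then the image of
`π^*Ω_X = Ω_{R/ℂ} ⊗_R S` in `Ω_{S/ℂ}` is the `S`-submodule generated by `d x_{n+1}` and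
`x_{n+1}·d X_i` (`i = 1,...,n`); i.e. `π^*Ω_X = Ω_Y(log Q)(−Q)` on this chart, where
`Q = {x_{n+1} = 0}` is the exceptional divisor.
-/

open MvPolynomial

set_option synthInstance.maxHeartbeats 1000000
set_option maxHeartbeats 1000000

noncomputable section

variable (n : ℕ)

/-- `R = ℂ[x_1,...,x_{n+1}]/(Σ x_i^2)`: the coordinate ring of the affine cone `X`. -/
abbrev coneRing :=
  MvPolynomial (Fin (n + 1)) ℂ ⧸
    Ideal.span {∑ i : Fin (n + 1), (X i : MvPolynomial (Fin (n + 1)) ℂ) ^ 2}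

/-- `S = ℂ[X_1,...,X_n,x_{n+1}]/(X_1^2+...+X_n^2+1)`: the chart `X_{n+1} = 1` of the
blow-up (the last variable is `x_{n+1}`, the first `n` are `X_1,...,X_n`). -/
abbrev chartRing :=
  MvPolynomial (Fin (n + 1)) ℂ ⧸
    Ideal.span {(∑ i : Fin n, (X i.castSucc : MvPolynomial (Fin (n + 1)) ℂ) ^ 2) + 1}

/-- The class of the `i`-th variable in `S`. -/
abbrev sVar (i : Fin (n + 1)) : chartRing n := Ideal.Quotient.mk _ (X i)

/-- The blow-down `π^* : R → S`, `x_i ↦ X_i·x_{n+1}` for `i ≤ n`, `x_{n+1} ↦ x_{n+1}`. -/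
def blowDown : coneRing n →ₐ[ℂ] chartRing n :=
  Ideal.Quotient.liftₐ _
    (aeval fun i : Fin (n + 1) =>
      if i = Fin.last n then sVar n (Fin.last n) else sVar n i * sVar n (Fin.last n))
    (by
      intro a ha
      rw [Ideal.mem_span_singleton] at ha
      obtain ⟨c, rfl⟩ := ha
      rw [map_mul]
      have hg : (∑ i : Fin n, sVar n i.castSucc ^ 2) + 1 = 0 := by
        have hmem : ((∑ i : Fin n, (X i.castSucc : MvPolynomial (Fin (n + 1)) ℂ) ^ 2) + 1) ∈
            Ideal.span {(∑ i : Fin n, (X i.castSucc : MvPolynomial (Fin (n + 1)) ℂ) ^ 2) + 1} :=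
          Ideal.subset_span rfl
        have h0 := Ideal.Quotient.eq_zero_iff_mem.mpr hmem
        rw [map_add, map_sum, map_one] at h0
        simp only [map_pow] at h0
        exact h0
      have hf : (aeval fun i : Fin (n + 1) =>
          if i = Fin.last n then sVar n (Fin.last n)
          else sVar n i * sVar n (Fin.last n))
          (∑ i : Fin (n + 1), (X i : MvPolynomial (Fin (n + 1)) ℂ) ^ 2) = 0 := by
        simp only [map_sum, map_pow, aeval_X]
        rw [Fin.sum_univ_castSucc]
        simp only [if_pos rfl]
        have hne : ∀ i : Fin n, (i.castSucc : Fin (n + 1)) ≠ Fin.last n := fun i =>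
          Fin.ne_of_lt (Fin.castSucc_lt_last i)
        calc (∑ i : Fin n,
                (if (i.castSucc : Fin (n + 1)) = Fin.last n then sVar n (Fin.last n)
                  else sVar n i.castSucc * sVar n (Fin.last n)) ^ 2) +
              sVar n (Fin.last n) ^ 2
            = (∑ i : Fin n, sVar n i.castSucc ^ 2) * sVar n (Fin.last n) ^ 2 +
              sVar n (Fin.last n) ^ 2 := by
              rw [Finset.sum_mul]
              congr 1
              refine Finset.sum_congr rfl fun i _ => ?_
              rw [if_neg (hne i)]; ring
          _ = ((∑ i : Fin n, sVar n i.castSucc ^ 2) + 1) * sVar n (Fin.last n) ^ 2 := by ring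
          _ = 0 := by rw [hg, zero_mul]
      rw [hf, zero_mul])

instance : Algebra (coneRing n) (chartRing n) := (blowDown n).toRingHom.toAlgebra

instance : IsScalarTower ℂ (coneRing n) (chartRing n) :=
  IsScalarTower.of_algebraMap_eq fun c => ((blowDown n).commutes c).symm

instance : SMulCommClass ℂ (coneRing n) (chartRing n) :=
  ⟨fun c a s => by rw [Algebra.smul_def a, Algebra.smul_def a]; exact (mul_smul_comm c _ s).symm⟩


/-! The differentials of the `R`-algebra generators `x_i` span `Ω_R`, so the image of `π^*Ω_X`
is spanned by the `d(π^* x_i)`: by `d x_{n+1}` and by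
`d(X_i x_{n+1}) = X_i d x_{n+1} + x_{n+1} d X_i`, which modulo `d x_{n+1}` is `x_{n+1} d X_i`. -/

namespace KaehlerDifferential

variable {R A B : Type*} [CommRing R] [CommRing A] [CommRing B] [Algebra R A] [Algebra R B]
  [Algebra A B] [IsScalarTower R A B]

theorem span_D_image_eq_top_of_adjoin_eq_top {s : Set A} (hs : Algebra.adjoin R s = ⊤) :
    Submodule.span A (D R A '' s) = ⊤ := by
  rw [eq_top_iff, ← span_range_derivation, Submodule.span_le]
  rintro _ ⟨a, rfl⟩
  have ha : a ∈ Algebra.adjoin R s := hs ▸ Algebra.mem_top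
  induction ha using Algebra.adjoin_induction with
  | mem x hx => exact Submodule.subset_span ⟨x, hx, rfl⟩
  | algebraMap r => simp
  | add x y _ _ hx hy => rw [map_add]; exact add_mem hx hy
  | mul x y _ _ hx hy =>
    rw [Derivation.leibniz]
    exact add_mem (Submodule.smul_mem _ _ hy) (Submodule.smul_mem _ _ hx)

theorem span_range_map_eq_span_D_algebraMap_image {s : Set A} (hs : Algebra.adjoin R s = ⊤) :
    Submodule.span B (Set.range (map R R A B)) =
      Submodule.span B ((fun a => D R B (algebraMap A B a)) '' s) := by
  rw [← LinearMap.coe_range, LinearMap.range_eq_map, ← span_D_image_eq_top_of_adjoin_eq_top hs,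
    Submodule.map_span, Submodule.span_span_of_tower, Set.image_image]
  simp only [map_D]

end KaehlerDifferential

theorem Derivation.span_singleton_union_range_map_mul {R S M ι : Type*} [CommSemiring R]
    [CommRing S] [Algebra R S] [AddCommGroup M] [Module S M] [Module R M] (D : Derivation R S M) (t : S)
    (x : ι → S) :
    Submodule.span S ({D t} ∪ Set.range fun i => D (x i * t)) =
      Submodule.span S ({D t} ∪ Set.range fun i => t • D (x i)) := by
  have hLeibniz (i : ι) : D (x i * t) = x i • D t + t • D (x i) := D.leibniz _ _
  apply le_antisymm <;> rw [Submodule.span_le] <;> rintro _ (rfl | ⟨i, rfl⟩)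
  · exact Submodule.subset_span (.inl rfl)
  · show D (x i * t) ∈ _
    rw [hLeibniz]
    exact add_mem (Submodule.smul_mem _ _ (Submodule.subset_span (.inl rfl)))
      (Submodule.subset_span (.inr ⟨i, rfl⟩))
  · exact Submodule.subset_span (.inl rfl)
  · show t • D (x i) ∈ _
    rw [eq_sub_of_add_eq' (hLeibniz i).symm]
    exact sub_mem (Submodule.subset_span (.inr ⟨i, rfl⟩))
      (Submodule.smul_mem _ _ (Submodule.subset_span (.inl rfl)))

theorem MvPolynomial.adjoin_range_mk_X {σ R : Type*} [CommRing R] (I : Ideal (MvPolynomial σ R)) :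
    Algebra.adjoin R (Set.range fun i => Ideal.Quotient.mk I (X i)) = ⊤ := by
  have h : (Set.range fun i => Ideal.Quotient.mk I (X i)) =
      Ideal.Quotient.mkₐ R I '' Set.range X := by
    rw [← Set.range_comp]; rfl
  rw [h, Algebra.adjoin_image, adjoin_range_X, Algebra.map_top,
    (AlgHom.range_eq_top _).mpr (Ideal.Quotient.mkₐ_surjective R I)]

theorem Fin.range_eq_insert_last {α : Type*} {n : ℕ} (f : Fin (n + 1) → α) :
    Set.range f = insert (f (Fin.last n)) (Set.range fun i : Fin n => f i.castSucc) := by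
  ext; simp [Fin.exists_fin_succ', or_comm, eq_comm]

theorem algebraMap_mk_X_last :
    algebraMap (coneRing n) (chartRing n) (Ideal.Quotient.mk _ (X (Fin.last n))) =
      sVar n (Fin.last n) :=
  (aeval_X _ _).trans (if_pos rfl)

theorem algebraMap_mk_X_castSucc (i : Fin n) :
    algebraMap (coneRing n) (chartRing n) (Ideal.Quotient.mk _ (X i.castSucc)) =
      sVar n i.castSucc * sVar n (Fin.last n) :=
  (aeval_X _ _).trans (if_neg (Fin.castSucc_ne_last i))

theorem stmt_16 :
    Submodule.span (chartRing n)
        (Set.range (KaehlerDifferential.map ℂ ℂ (coneRing n) (chartRing n))) =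
      Submodule.span (chartRing n)
        ({KaehlerDifferential.D ℂ (chartRing n) (sVar n (Fin.last n))} ∪
          Set.range fun i : Fin n =>
            sVar n (Fin.last n) •
              KaehlerDifferential.D ℂ (chartRing n) (sVar n i.castSucc)) := by
  rw [KaehlerDifferential.span_range_map_eq_span_D_algebraMap_image
      (MvPolynomial.adjoin_range_mk_X _), ← Set.range_comp, Fin.range_eq_insert_last,
    ← Derivation.span_singleton_union_range_map_mul]
  simp only [Function.comp_apply, algebraMap_mk_X_last, algebraMap_mk_X_castSucc, Set.insert_eq]

end
end
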